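/- arXiv:2101.12716 — 6 statements merged into one kernel-verified Lean document; each statement's English description precedes it below -/
import Mathlib

section
/- Let R be a relation on a set M and let k_R be the largest relation satisfying push-up relative to R. Then k_R is antisymmetric if and only if R is weakly distinguishing, i.e. if and only if for all p, q ∈ M, the equalities {z | (p,z) ∈ R} = {z | (q,z) ∈ R} and {z | (z,p) ∈ R} = {z | (z,q) ∈ R} together imply p = q. -/
/-- `PushUp R S` means: the relation `S` satisfies push-up relative to `R`. -/
def PushUp {M : Type*} (R S : Set (M × M)) : Prop :=
  (∀ x y z : M, (x, y) ∈ S → (y, z) ∈ R → (x, z) ∈ R) ∧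
  (∀ x y z : M, (x, y) ∈ R → (y, z) ∈ S → (x, z) ∈ R)

/-- `IsLargestPushUp R k` means: `k` is the largest relation satisfying push-up
relative to `R`. -/
def IsLargestPushUp {M : Type*} (R k : Set (M × M)) : Prop :=
  PushUp R k ∧ ∀ S : Set (M × M), PushUp R S → S ⊆ k

/-- `k_R` is antisymmetric iff `R` is weakly distinguishing. -/
theorem stmt_2 {M : Type*} (R k : Set (M × M)) (hk : IsLargestPushUp R k) :
    (∀ p q : M, (p, q) ∈ k → (q, p) ∈ k → p = q) ↔
    (∀ p q : M,
      {z : M | (p, z) ∈ R} = {z : M | (q, z) ∈ R} →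
      {z : M | (z, p) ∈ R} = {z : M | (z, q) ∈ R} → p = q) := by
  set K : Set (M × M) :=
    {p | (∀ z, (p.2, z) ∈ R → (p.1, z) ∈ R) ∧ (∀ z, (z, p.1) ∈ R → (z, p.2) ∈ R)} with hKdef
  have hKpush : PushUp R K := by
    constructor
    · intro x y z hxy hyz; exact hxy.1 z hyz
    · intro x y z hxy hyz; exact hyz.2 x hxy
  have hKsub : K ⊆ k := hk.2 K hKpush
  have hkK : k ⊆ K := by
    rintro ⟨x, y⟩ hxy
    exact ⟨fun z hz => hk.1.1 x y z hxy hz, fun z hz => hk.1.2 z x y hz hxy⟩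
  constructor
  · intro h p q h1 h2
    have h1' := Set.ext_iff.1 h1
    have h2' := Set.ext_iff.1 h2
    refine h p q (hKsub ?_) (hKsub ?_)
    · exact ⟨fun z hz => (h1' z).2 hz, fun z hz => (h2' z).1 hz⟩
    · exact ⟨fun z hz => (h1' z).1 hz, fun z hz => (h2' z).2 hz⟩
  · intro h p q hpq hqp
    have h1 := hkK hpq
    have h2 := hkK hqp
    refine h p q ?_ ?_
    · ext z; exact ⟨fun hz => h2.1 z hz, fun hz => h1.1 z hz⟩
    · ext z; exact ⟨fun hz => h1.2 z hz, fun hz => h2.2 z hz⟩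
end

section
/- Let R be a transitive, irreflexive relation on a set M and let k_R be the largest relation satisfying push-up relative to R. Then the pair (R, k_R) is a causal structure in the sense of Kronheimer and Penrose — meaning: k_R is transitive, reflexive and antisymmetric; R is contained in k_R and is irreflexive; and k_R satisfies push-up relative to R — if and only if R is weakly distinguishing. -/
/-- For a transitive irreflexive `R`, the pair `(R, k_R)` is a causal
structure in the sense of Kronheimer and Penrose iff `R` is weakly distinguishing. -/
theorem stmt_3 {M : Type*} (R k : Set (M × M))
    (hRtrans : ∀ a b c : M, (a, b) ∈ R → (b, c) ∈ R → (a, c) ∈ R)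
    (hRirrefl : ∀ p : M, (p, p) ∉ R)
    (hk : IsLargestPushUp R k) :
    ((∀ a b c : M, (a, b) ∈ k → (b, c) ∈ k → (a, c) ∈ k) ∧
     (∀ p : M, (p, p) ∈ k) ∧
     (∀ p q : M, (p, q) ∈ k → (q, p) ∈ k → p = q) ∧
     R ⊆ k ∧
     (∀ p : M, (p, p) ∉ R) ∧
     PushUp R k) ↔
    (∀ p q : M,
      {z : M | (p, z) ∈ R} = {z : M | (q, z) ∈ R} →
      {z : M | (z, p) ∈ R} = {z : M | (z, q) ∈ R} → p = q) := by
  -- characterize k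
  have hkmem : ∀ x y : M, (x, y) ∈ k ↔
      ((∀ z, (y, z) ∈ R → (x, z) ∈ R) ∧ (∀ z, (z, x) ∈ R → (z, y) ∈ R)) := by
    intro x y
    constructor
    · intro hxy
      exact ⟨fun z h => hk.1.1 x y z hxy h, fun z h => hk.1.2 z x y h hxy⟩
    · intro ⟨h1, h2⟩
      have : PushUp R {(x, y)} := by
        constructor
        · rintro a b c hab hbc
          rw [Set.mem_singleton_iff, Prod.ext_iff] at hab
          obtain ⟨rfl, rfl⟩ := hab
          exact h1 c hbc
        · rintro a b c hab hbc
          rw [Set.mem_singleton_iff, Prod.ext_iff] at hbc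
          obtain ⟨rfl, rfl⟩ := hbc
          exact h2 a hab
      exact hk.2 _ this rfl
  constructor
  · rintro ⟨-, -, hanti, -, -, -⟩ p q h1 h2
    apply hanti
    · rw [hkmem]
      constructor
      · intro z hz; have := h1 ▸ (show z ∈ {z : M | (q, z) ∈ R} from hz); exact this
      · intro z hz; have := h2 ▸ (show z ∈ {z : M | (z, p) ∈ R} from hz); exact this
    · rw [hkmem]
      constructor
      · intro z hz; have := h1.symm ▸ (show z ∈ {z : M | (p, z) ∈ R} from hz); exact this
      · intro z hz; have := h2.symm ▸ (show z ∈ {z : M | (z, q) ∈ R} from hz); exact this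
  · intro hwd
    refine ⟨?_, ?_, ?_, ?_, hRirrefl, hk.1⟩
    · intro a b c hab hbc
      rw [hkmem] at *
      exact ⟨fun z h => hab.1 z (hbc.1 z h), fun z h => hbc.2 z (hab.2 z h)⟩
    · intro p; rw [hkmem]; exact ⟨fun z h => h, fun z h => h⟩
    · intro p q hpq hqp
      rw [hkmem] at hpq hqp
      apply hwd
      · ext z; exact ⟨fun h => hqp.1 z h, fun h => hpq.1 z h⟩
      · ext z; exact ⟨fun h => hpq.2 z h, fun h => hqp.2 z h⟩
    · rintro ⟨a, b⟩ hab
      rw [hkmem]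
      exact ⟨fun z h => hRtrans a b z hab h, fun z h => hRtrans z a b h hab⟩
end

section
/- Let M be a topological space and R a relation on M such that for every q ∈ M there exists a continuous curve γ : [0,1) → M with γ(0) = q and (q, γ(t)) ∈ R for all t ∈ (0,1). Then the largest relation k_R satisfying push-up relative to R is contained in the closure of R in the product topology on M × M. -/
/-- If every point starts a continuous curve staying `R`-related to it,
then `k_R` is contained in the closure of `R`. -/
theorem stmt_4 {M : Type*} [TopologicalSpace M] (R k : Set (M × M))
    (hcurve : ∀ q : M, ∃ γ : ℝ → M, ContinuousOn γ (Set.Ico 0 1) ∧ γ 0 = q ∧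
      ∀ t ∈ Set.Ioo (0 : ℝ) 1, (q, γ t) ∈ R)
    (hk : IsLargestPushUp R k) :
    k ⊆ closure R := by
  rintro ⟨p, q⟩ hpq
  obtain ⟨γ, hcont, hγ0, hγR⟩ := hcurve q
  -- γ t → q as t → 0 within Ioo 0 1
  have h0 : (0 : ℝ) ∈ Set.Ico (0 : ℝ) 1 := ⟨le_refl 0, one_pos⟩
  have htend : Filter.Tendsto γ (nhdsWithin 0 (Set.Ioo (0:ℝ) 1)) (nhds q) := by
    have := (hcont 0 h0).tendsto
    rw [hγ0] at this
    exact this.mono_left (nhdsWithin_mono 0 Set.Ioo_subset_Ico_self)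
  have hne : (nhdsWithin (0:ℝ) (Set.Ioo 0 1)).NeBot := by
    apply mem_closure_iff_nhdsWithin_neBot.mp
    rw [closure_Ioo one_ne_zero.symm]
    exact ⟨le_refl 0, one_pos.le⟩
  have htend2 : Filter.Tendsto (fun t => (p, γ t)) (nhdsWithin 0 (Set.Ioo (0:ℝ) 1))
      (nhds (p, q)) := Filter.Tendsto.prodMk_nhds tendsto_const_nhds htend
  refine mem_closure_of_tendsto htend2 ?_
  filter_upwards [self_mem_nhdsWithin] with t ht
  exact (hk.1).1 p q (γ t) hpq (hγR t ht)
end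

section
/- Let M be a topological space and R a transitive relation on M such that for every q ∈ M there exists a continuous curve γ : [0,1) → M with γ(0) = q and (q, γ(t)) ∈ R for all t ∈ (0,1). Let k_R be the largest relation satisfying push-up relative to R. Then the following are equivalent: (a) k_R is closed in M × M; (b) k_R equals the closure of R in M × M; (c) the closure of R in M × M satisfies push-up relative to R. -/
open Topology in
/-- For transitive `R` with the curve property, the following are
equivalent: `k_R` is closed; `k_R = closure R`; `closure R` satisfies push-up
relative to `R`. -/
theorem stmt_5 {M : Type*} [TopologicalSpace M] (R k : Set (M × M))
    (hRtrans : ∀ a b c : M, (a, b) ∈ R → (b, c) ∈ R → (a, c) ∈ R)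
    (hcurve : ∀ q : M, ∃ γ : ℝ → M, ContinuousOn γ (Set.Ico 0 1) ∧ γ 0 = q ∧
      ∀ t ∈ Set.Ioo (0 : ℝ) 1, (q, γ t) ∈ R)
    (hk : IsLargestPushUp R k) :
    [IsClosed k, k = closure R, PushUp R (closure R)].TFAE := by
  have hRsub : R ⊆ k := hk.2 R ⟨hRtrans, hRtrans⟩
  have hksub : k ⊆ closure R := by
    rintro ⟨x, y⟩ hp
    obtain ⟨γ, hγc, hγ0, hγR⟩ := hcurve y
    have hne : (𝓝[Set.Ioo (0 : ℝ) 1] 0).NeBot := by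
      rw [nhdsWithin_Ioo_eq_nhdsGT zero_lt_one]
      infer_instance
    have ht : Filter.Tendsto γ (𝓝[Set.Ioo (0 : ℝ) 1] 0) (𝓝 y) := by
      have h0 : ContinuousWithinAt γ (Set.Ico 0 1) 0 :=
        hγc 0 ⟨le_refl 0, zero_lt_one⟩
      have h1 := h0.mono Set.Ioo_subset_Ico_self
      rw [ContinuousWithinAt, hγ0] at h1
      exact h1
    have htp : Filter.Tendsto (fun t => (x, γ t)) (𝓝[Set.Ioo (0 : ℝ) 1] 0)
        (𝓝 (x, y)) := Filter.Tendsto.prodMk_nhds tendsto_const_nhds ht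
    refine mem_closure_of_tendsto htp ?_
    filter_upwards [self_mem_nhdsWithin] with t htI
    exact hk.1.1 x y (γ t) hp (hγR t htI)
  tfae_have 1 → 2 := fun h => subset_antisymm hksub (closure_minimal hRsub h)
  tfae_have 2 → 3 := fun h => h ▸ hk.1
  tfae_have 3 → 1 := fun h => by
    have : k = closure R := subset_antisymm hksub (hk.2 _ h)
    rw [this]; exact isClosed_closure
  tfae_finish
end

section
/- Let M be a topological space and let J, I be relations on M such that: (i) I is open in the product topology on M × M and I ⊆ J; (ii) J satisfies push-up relative to I; (iii) for every q ∈ M and every open neighborhood V of q there exists r ∈ V with (r,q) ∈ I. Then I equals the interior of J in M × M. -/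
/-- Any open chronological relation `I ⊆ J` relative to which `J`
satisfies push-up and whose pasts meet every neighborhood of every point must be
the interior of `J`. -/
theorem stmt_7 {M : Type*} [TopologicalSpace M] (J I : Set (M × M))
    (hIopen : IsOpen I) (hIJ : I ⊆ J)
    (hpu : PushUp I J)
    (hpast : ∀ q : M, ∀ V : Set M, IsOpen V → q ∈ V → ∃ r ∈ V, (r, q) ∈ I) :
    I = interior J := by
  apply Set.Subset.antisymm
  · exact interior_maximal hIJ hIopen
  · rintro ⟨p, q⟩ hpq
    obtain ⟨U, V, hU, hV, hpU, hqV, hUV⟩ :=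
      isOpen_prod_iff.mp isOpen_interior p q hpq
    obtain ⟨r, hrV, hrq⟩ := hpast q V hV hqV
    have hprJ : (p, r) ∈ J := interior_subset (hUV ⟨hpU, hrV⟩)
    exact hpu.1 p r q hprJ hrq
end

section
/- Let R be a relation on a set M and let k_R be the largest relation satisfying push-up relative to R. Then for all p, q ∈ M, both (p,q) ∈ k_R and (q,p) ∈ k_R hold if and only if {z | (p,z) ∈ R} = {z | (q,z) ∈ R} and {z | (z,p) ∈ R} = {z | (z,q) ∈ R}. -/
/-- `(p,q) ∈ k_R` and `(q,p) ∈ k_R` iff `p` and `q` have the same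
`R`-future and the same `R`-past. -/
theorem stmt_15 {M : Type*} (R k : Set (M × M)) (hk : IsLargestPushUp R k) :
    ∀ p q : M, ((p, q) ∈ k ∧ (q, p) ∈ k) ↔
      ({z : M | (p, z) ∈ R} = {z : M | (q, z) ∈ R} ∧
       {z : M | (z, p) ∈ R} = {z : M | (z, q) ∈ R}) := by
  obtain ⟨⟨h1, h2⟩, hmax⟩ := hk
  intro p q
  constructor
  · rintro ⟨hpq, hqp⟩
    constructor
    · ext z
      exact ⟨fun h => h1 q p z hqp h, fun h => h1 p q z hpq h⟩
    · ext z
      exact ⟨fun h => h2 z p q h hpq, fun h => h2 z q p h hqp⟩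
  · rintro ⟨hf, hp⟩
    have hS : PushUp R {xy : M × M | {z : M | (xy.1, z) ∈ R} = {z : M | (xy.2, z) ∈ R} ∧
        {z : M | (z, xy.1) ∈ R} = {z : M | (z, xy.2) ∈ R}} := by
      constructor
      · rintro x y z ⟨h, _⟩ hyz
        rw [show R = R from rfl] at hyz
        have : z ∈ {z : M | (y, z) ∈ R} := hyz
        rw [← h] at this
        exact this
      · rintro x y z hxy ⟨_, h⟩
        have : x ∈ {w : M | (w, y) ∈ R} := hxy
        rw [h] at this
        exact this
    have hsub := hmax _ hS
    exact ⟨hsub ⟨hf, hp⟩, hsub ⟨hf.symm, hp.symm⟩⟩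
end
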